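/- Let ρ : C → ℝ³ be a smooth map on a cylinder C = S¹ × [a,b] with coordinates (θ, t). Suppose ∫_C |ρ_θ|² ≤ (1/10) ∫_C |∇ρ|², where |∇ρ|² = |ρ_t|² + |ρ_θ|². Then the energy-area gap satisfies E(ρ) − Area(ρ) ≥ (1/8) ∫_C (|ρ_t|² − |ρ_θ|²), where E(ρ) = ½∫_C (|ρ_t|² + |ρ_θ|²) and Area(ρ) = ∫_C |ρ_t × ρ_θ|. In particular, E(ρ) − Area(ρ) ≥ (1/8)·(8/10)·∫_C |∇ρ|² − (1/4)∫_C|ρ_θ|² > 0 whenever ∫_C |∇ρ|² > 0. -/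

import Mathlib

open MeasureTheory Real
open scoped RealInnerProductSpace

noncomputable section

/-- `ρ_θ`, the partial derivative in the first (angular) coordinate. -/
def dTheta (ρ : ℝ × ℝ → EuclideanSpace ℝ (Fin 3)) (p : ℝ × ℝ) : EuclideanSpace ℝ (Fin 3) :=
  fderiv ℝ ρ p (1, 0)

/-- `ρ_t`, the partial derivative in the second coordinate. -/
def dT (ρ : ℝ × ℝ → EuclideanSpace ℝ (Fin 3)) (p : ℝ × ℝ) : EuclideanSpace ℝ (Fin 3) :=
  fderiv ℝ ρ p (0, 1)

/-- `|ρ_t × ρ_θ|`, computed via the Lagrange identity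
`|a × b|² = |a|²|b|² − ⟪a,b⟫²`. -/
def crossNorm (ρ : ℝ × ℝ → EuclideanSpace ℝ (Fin 3)) (p : ℝ × ℝ) : ℝ :=
  Real.sqrt (‖dT ρ p‖ ^ 2 * ‖dTheta ρ p‖ ^ 2 - ⟪dT ρ p, dTheta ρ p⟫ ^ 2)

/-!
Pointwise, the area density `|ρ_t × ρ_θ| ≤ |ρ_t| |ρ_θ|` is at most `|ρ_t|²/4 + |ρ_θ|²`, so
`Area ≤ A/4 + B` with `A = ∫|ρ_t|²`, `B = ∫|ρ_θ|²`. The smallness hypothesis says `9B ≤ A`,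
and then `E − Area ≥ (A + B)/2 − A/4 − B = (A − B)/8 + (A − 3B)/8 ≥ (A − B)/8`, which is
positive as soon as `A + B > 0`.
-/

section GramArea

variable {E : Type*} [NormedAddCommGroup E] [InnerProductSpace ℝ E]

theorem sqrt_norm_sq_mul_norm_sq_sub_inner_sq_le (u v : E) :
    √(‖u‖ ^ 2 * ‖v‖ ^ 2 - ⟪u, v⟫ ^ 2) ≤ ‖u‖ * ‖v‖ := by
  rw [Real.sqrt_le_iff]
  exact ⟨by positivity, by nlinarith [sq_nonneg ⟪u, v⟫]⟩

theorem sqrt_norm_sq_mul_norm_sq_sub_inner_sq_le_div_four_add (u v : E) :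
    √(‖u‖ ^ 2 * ‖v‖ ^ 2 - ⟪u, v⟫ ^ 2) ≤ ‖u‖ ^ 2 / 4 + ‖v‖ ^ 2 :=
  calc √(‖u‖ ^ 2 * ‖v‖ ^ 2 - ⟪u, v⟫ ^ 2) ≤ ‖u‖ * ‖v‖ :=
        sqrt_norm_sq_mul_norm_sq_sub_inner_sq_le u v
    _ ≤ ‖u‖ ^ 2 / 4 + ‖v‖ ^ 2 := by nlinarith [sq_nonneg (‖u‖ / 2 - ‖v‖)]

theorem setIntegral_sqrt_norm_sq_mul_norm_sq_sub_inner_sq_le {α : Type*} [MeasurableSpace α]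
    {μ : Measure α} {s : Set α} {u v : α → E}
    (hu : IntegrableOn (fun x ↦ ‖u x‖ ^ 2) s μ) (hv : IntegrableOn (fun x ↦ ‖v x‖ ^ 2) s μ) :
    ∫ x in s, √(‖u x‖ ^ 2 * ‖v x‖ ^ 2 - ⟪u x, v x⟫ ^ 2) ∂μ ≤
      (∫ x in s, ‖u x‖ ^ 2 ∂μ) / 4 + ∫ x in s, ‖v x‖ ^ 2 ∂μ :=
  calc ∫ x in s, √(‖u x‖ ^ 2 * ‖v x‖ ^ 2 - ⟪u x, v x⟫ ^ 2) ∂μ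
        ≤ ∫ x in s, (‖u x‖ ^ 2 / 4 + ‖v x‖ ^ 2) ∂μ :=
          integral_mono_of_nonneg (.of_forall fun _ ↦ Real.sqrt_nonneg _)
            ((hu.div_const 4).add hv)
            (.of_forall fun x ↦ sqrt_norm_sq_mul_norm_sq_sub_inner_sq_le_div_four_add (u x) (v x))
    _ = (∫ x in s, ‖u x‖ ^ 2 ∂μ) / 4 + ∫ x in s, ‖v x‖ ^ 2 ∂μ := by
          rw [integral_add (hu.div_const 4) hv, integral_div]

end GramArea

theorem energy_area_gap_on_cylinder_general (a b : ℝ)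
    (ρ : ℝ × ℝ → EuclideanSpace ℝ (Fin 3)) (hρ : ContDiff ℝ 1 ρ)
    (C : Set (ℝ × ℝ)) (hC : C = Set.Ioc (0:ℝ) (2 * π) ×ˢ Set.Icc a b)
    (hsmall : (∫ p in C, ‖dTheta ρ p‖ ^ 2) ≤
      (1 / 10) * ∫ p in C, (‖dT ρ p‖ ^ 2 + ‖dTheta ρ p‖ ^ 2)) :
    (1 / 8) * (∫ p in C, (‖dT ρ p‖ ^ 2 - ‖dTheta ρ p‖ ^ 2)) ≤
      (1 / 2) * (∫ p in C, (‖dT ρ p‖ ^ 2 + ‖dTheta ρ p‖ ^ 2)) - ∫ p in C, crossNorm ρ p ∧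
    ((0 < ∫ p in C, (‖dT ρ p‖ ^ 2 + ‖dTheta ρ p‖ ^ 2)) →
      0 < (1 / 2) * (∫ p in C, (‖dT ρ p‖ ^ 2 + ‖dTheta ρ p‖ ^ 2))
        - ∫ p in C, crossNorm ρ p) := by
  have hDρ : Continuous (fderiv ℝ ρ) := hρ.continuous_fderiv one_ne_zero
  have hCK : C ⊆ Set.Icc (0:ℝ) (2 * π) ×ˢ Set.Icc a b :=
    hC ▸ Set.prod_mono Set.Ioc_subset_Icc_self le_rfl
  have integrableOn_C {f : ℝ × ℝ → ℝ} (hf : Continuous f) : IntegrableOn f C :=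
    (hf.continuousOn.integrableOn_compact (isCompact_Icc.prod isCompact_Icc)).mono_set hCK
  have hu : IntegrableOn (fun p ↦ ‖dT ρ p‖ ^ 2) C :=
    integrableOn_C ((hDρ.clm_apply continuous_const).norm.pow 2)
  have hv : IntegrableOn (fun p ↦ ‖dTheta ρ p‖ ^ 2) C :=
    integrableOn_C ((hDρ.clm_apply continuous_const).norm.pow 2)
  have hArea : ∫ p in C, crossNorm ρ p ≤
      (∫ p in C, ‖dT ρ p‖ ^ 2) / 4 + ∫ p in C, ‖dTheta ρ p‖ ^ 2 :=
    setIntegral_sqrt_norm_sq_mul_norm_sq_sub_inner_sq_le hu hv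
  have hB : 0 ≤ ∫ p in C, ‖dTheta ρ p‖ ^ 2 := integral_nonneg fun _ ↦ sq_nonneg _
  rw [integral_add hu hv] at hsmall ⊢
  rw [integral_sub hu hv]
  exact ⟨by linarith, fun _ ↦ by linarith⟩

theorem energy_area_gap_on_cylinder (a b : ℝ) (hab : a ≤ b)
    (ρ : ℝ × ℝ → EuclideanSpace ℝ (Fin 3)) (hρ : ContDiff ℝ 1 ρ)
    (hper : ∀ θ t, ρ (θ + 2 * π, t) = ρ (θ, t))
    (C : Set (ℝ × ℝ)) (hC : C = Set.Ioc (0:ℝ) (2 * π) ×ˢ Set.Icc a b)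
    (hsmall : (∫ p in C, ‖dTheta ρ p‖ ^ 2) ≤
      (1 / 10) * ∫ p in C, (‖dT ρ p‖ ^ 2 + ‖dTheta ρ p‖ ^ 2)) :
    (1 / 8) * (∫ p in C, (‖dT ρ p‖ ^ 2 - ‖dTheta ρ p‖ ^ 2)) ≤
      (1 / 2) * (∫ p in C, (‖dT ρ p‖ ^ 2 + ‖dTheta ρ p‖ ^ 2)) - ∫ p in C, crossNorm ρ p ∧
    ((0 < ∫ p in C, (‖dT ρ p‖ ^ 2 + ‖dTheta ρ p‖ ^ 2)) →
      0 < (1 / 2) * (∫ p in C, (‖dT ρ p‖ ^ 2 + ‖dTheta ρ p‖ ^ 2))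
        - ∫ p in C, crossNorm ρ p) :=
  energy_area_gap_on_cylinder_general a b ρ hρ C hC hsmall

end
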